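/- arXiv:2503.10135 — 3 statements merged into one kernel-verified Lean document; each statement's English description precedes it below -/
import Mathlib

section
/- Let 1 ≥ p_1 ≥ p_2 ≥ ... ≥ p_D ≥ 0 and let 1 < d < D. Suppose ζ_i ∈ [0,1] with ζ_i < p_i for all i, Σ_{i=1}^d ζ_i = Σ_{j=d+1}^D ζ_j, and the modified probabilities p̃_i = p_i + ζ_i for i ≤ d and p̃_i = p_i − ζ_i for i > d all lie in [0,1]. Then Σ_{k=1}^D Π_{i=1}^k p̃_i ≥ Σ_{k=1}^D Π_{i=1}^k p_i. -/
/-!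
Write `a = p` and `b = p̃`. Expanding `∏_{i ≤ k} b i - ∏_{i ≤ k} a i` as a telescoping sum and
summing over `k` gives `E[L](b) - E[L](a) = ∑_i (b i - a i) W i`, where
`W i = (∏_{j < i} b j) * ∑_{k = i}^D ∏_{i < j ≤ k} a j`. Both factors of `W` are nonnegative and
antitone: the first because `b ≤ 1`, the second because `a` is antitone. The weights `b i - a i`
are `≥ 0` up to `d`, `≤ 0` after `d`, and sum to zero, so `∑_i (b i - a i) W i` is
`∑_i (b i - a i) (W i - W d) ≥ 0`.
-/

open Finset

def expectedLength {R : Type*} [CommSemiring R] (p : ℕ → R) (n : ℕ) : R :=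
  ∑ k ∈ Icc 1 n, ∏ i ∈ Icc 1 k, p i

def tailLength {R : Type*} [CommSemiring R] (p : ℕ → R) (n i : ℕ) : R :=
  ∑ k ∈ Icc i n, ∏ j ∈ Ioc i k, p j

theorem expectedLength_sub_expectedLength {R : Type*} [CommRing R] (a b : ℕ → R) (n : ℕ) :
    expectedLength b n - expectedLength a n =
      ∑ i ∈ Icc 1 n, (b i - a i) * ((∏ j ∈ Ico 1 i, b j) * tailLength a n i) := by
  have prod_sub (k : ℕ) : ∏ i ∈ Icc 1 k, b i - ∏ i ∈ Icc 1 k, a i =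
      ∑ i ∈ Icc 1 k, (b i - a i) * ((∏ j ∈ Ico 1 i, b j) * ∏ j ∈ Ioc i k, a j) := by
    have h := prod_add_ordered (Icc 1 k) a (fun i => b i - a i)
    simp only [add_sub_cancel] at h
    rw [h, add_sub_cancel_left]
    refine sum_congr rfl fun i hi => ?_
    rw [mul_assoc]
    congr 3 <;> ext j <;> simp only [mem_filter, mem_Icc, mem_Ico, mem_Ioc] at hi ⊢ <;> omega
  simp only [expectedLength, tailLength, ← sum_sub_distrib, prod_sub, mul_sum]
  exact sum_comm' fun k i => by simp only [mem_Icc]; omega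

section Order

variable {R : Type*} [CommSemiring R] [PartialOrder R] [IsOrderedRing R]

theorem prod_Ioc_nonneg {a : ℕ → R} {n : ℕ} (ha0 : ∀ j ∈ Icc 1 n, 0 ≤ a j) {i k : ℕ}
    (hk : k ≤ n) : 0 ≤ ∏ j ∈ Ioc i k, a j :=
  prod_nonneg fun j hj => ha0 j (by simp only [mem_Icc, mem_Ioc] at hj ⊢; omega)

theorem tailLength_nonneg {a : ℕ → R} {n : ℕ} (ha0 : ∀ j ∈ Icc 1 n, 0 ≤ a j) (i : ℕ) :
    0 ≤ tailLength a n i :=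
  sum_nonneg fun _ hk => prod_Ioc_nonneg ha0 (mem_Icc.1 hk).2

theorem tailLength_antitone {a : ℕ → R} {n : ℕ} (ha : AntitoneOn a (Set.Icc 1 n))
    (ha0 : ∀ j ∈ Icc 1 n, 0 ≤ a j) : Antitone (tailLength a n) := by
  refine antitone_nat_of_succ_le fun i => ?_
  rcases le_or_gt n i with hni | hin
  · rw [tailLength, Icc_eq_empty (by omega), sum_empty]
    exact tailLength_nonneg ha0 i
  obtain ⟨m, rfl⟩ : ∃ m, n = m + 1 := ⟨n - 1, by omega⟩
  calc tailLength a (m + 1) (i + 1)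
      = ∑ k ∈ Icc i m, ∏ j ∈ Ioc i k, a (j + 1) := by
        rw [tailLength, ← map_add_right_Icc, sum_map]
        refine sum_congr rfl fun k _ => ?_
        rw [addRightEmbedding_apply, ← map_add_right_Ioc, prod_map]
        rfl
    _ ≤ ∑ k ∈ Icc i m, ∏ j ∈ Ioc i k, a j := by
        refine sum_le_sum fun k hk => prod_le_prod (fun j hj => ?_) fun j hj => ?_ <;>
          simp only [mem_Icc, mem_Ioc] at hk hj
        · exact ha0 _ (by simp only [mem_Icc]; omega)
        · exact ha ⟨by omega, by omega⟩ ⟨by omega, by omega⟩ (by omega)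
    _ ≤ tailLength a (m + 1) i :=
        sum_le_sum_of_subset_of_nonneg (Icc_subset_Icc_right (by omega)) fun _ hk _ =>
          prod_Ioc_nonneg ha0 (mem_Icc.1 hk).2

theorem prod_Ico_one_antitoneOn {b : ℕ → R} {n : ℕ} (hb0 : ∀ j ∈ Icc 1 n, 0 ≤ b j)
    (hb1 : ∀ j ∈ Icc 1 n, b j ≤ 1) : AntitoneOn (fun i => ∏ j ∈ Ico 1 i, b j) (Set.Icc 1 n) := by
  refine antitoneOn_of_succ_le Set.ordConnected_Icc fun i _ hi _ => ?_
  rw [Order.succ_eq_add_one, prod_Ico_succ_top hi.1]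
  refine mul_le_of_le_one_right (prod_nonneg fun j hj => hb0 j ?_) (hb1 i (mem_Icc.2 hi))
  simp only [mem_Ico, mem_Icc] at hj ⊢
  exact ⟨hj.1, by linarith [hj.2, hi.2]⟩

theorem prod_Ico_one_mul_tailLength_antitoneOn {a b : ℕ → R} {n : ℕ}
    (ha : AntitoneOn a (Set.Icc 1 n)) (ha0 : ∀ j ∈ Icc 1 n, 0 ≤ a j)
    (hb0 : ∀ j ∈ Icc 1 n, 0 ≤ b j) (hb1 : ∀ j ∈ Icc 1 n, b j ≤ 1) :
    AntitoneOn (fun i => (∏ j ∈ Ico 1 i, b j) * tailLength a n i) (Set.Icc 1 n) :=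
  fun i hi i' hi' hii' =>
    mul_le_mul (prod_Ico_one_antitoneOn hb0 hb1 hi hi' hii') (tailLength_antitone ha ha0 hii')
      (tailLength_nonneg ha0 i')
      (prod_nonneg fun j hj => hb0 j <| by
        have := hi'.2
        simp only [mem_Ico, mem_Icc] at hj ⊢
        omega)

end Order

theorem sum_mul_nonneg_of_sign_change {R ι : Type*} [Ring R] [PartialOrder R] [IsOrderedRing R]
    [LinearOrder ι] {s : Finset ι} {c w : ι → R} {d : ι} (hd : d ∈ s) (hw : AntitoneOn w s)
    (hc_le : ∀ i ∈ s, i ≤ d → 0 ≤ c i) (hc_gt : ∀ i ∈ s, d < i → c i ≤ 0)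
    (hc : ∑ i ∈ s, c i = 0) :
    0 ≤ ∑ i ∈ s, c i * w i := by
  have h : ∑ i ∈ s, c i * w i = ∑ i ∈ s, c i * (w i - w d) := by
    simp only [mul_sub, sum_sub_distrib, ← sum_mul, hc, zero_mul, sub_zero]
  rw [h]
  refine sum_nonneg fun i hi => ?_
  rcases le_or_gt i d with hid | hdi
  · exact mul_nonneg (hc_le i hi hid) (sub_nonneg.2 (hw hi hd hid))
  · exact mul_nonneg_of_nonpos_of_nonpos (hc_gt i hi hdi) (sub_nonpos.2 (hw hd hi hdi.le))

theorem stmt1_general (D d : ℕ) (hd : 1 < d) (hdD : d < D) (p ζ ptilde : ℕ → ℝ)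
    (hpD : 0 ≤ p D)
    (hmono : ∀ i, 1 ≤ i → i < D → p (i + 1) ≤ p i)
    (hζ0 : ∀ i ∈ Finset.Icc 1 D, 0 ≤ ζ i)
    (hsum : ∑ i ∈ Finset.Icc 1 d, ζ i = ∑ j ∈ Finset.Icc (d + 1) D, ζ j)
    (hptA : ∀ i ∈ Finset.Icc 1 d, ptilde i = p i + ζ i)
    (hptB : ∀ i ∈ Finset.Icc (d + 1) D, ptilde i = p i - ζ i)
    (hpt0 : ∀ i ∈ Finset.Icc 1 D, 0 ≤ ptilde i)
    (hpt1 : ∀ i ∈ Finset.Icc 1 D, ptilde i ≤ 1) :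
    ∑ k ∈ Finset.Icc 1 D, ∏ i ∈ Finset.Icc 1 k, p i
      ≤ ∑ k ∈ Finset.Icc 1 D, ∏ i ∈ Finset.Icc 1 k, ptilde i := by
  have hanti : AntitoneOn p (Set.Icc 1 D) :=
    antitoneOn_of_succ_le Set.ordConnected_Icc fun i _ hi hi' =>
      hmono i hi.1 (Order.succ_le_iff.1 hi'.2)
  have hp0 : ∀ j ∈ Icc 1 D, 0 ≤ p j := fun j hj =>
    hpD.trans (hanti (mem_Icc.1 hj) ⟨by omega, le_rfl⟩ (mem_Icc.1 hj).2)
  rw [← sub_nonneg]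
  change 0 ≤ expectedLength ptilde D - expectedLength p D
  rw [expectedLength_sub_expectedLength]
  refine sum_mul_nonneg_of_sign_change (mem_Icc.2 ⟨hd.le, hdD.le⟩)
    (coe_Icc 1 D ▸ prod_Ico_one_mul_tailLength_antitoneOn hanti hp0 hpt0 hpt1)
    (fun i hi hid => ?_) (fun i hi hdi => ?_) ?_
  · rw [hptA i (mem_Icc.2 ⟨(mem_Icc.1 hi).1, hid⟩), add_sub_cancel_left]
    exact hζ0 i hi
  · rw [hptB i (mem_Icc.2 ⟨hdi, (mem_Icc.1 hi).2⟩), sub_sub_cancel_left, neg_nonpos]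
    exact hζ0 i hi
  · have hsplit := sum_Ioc_consecutive (fun i => ptilde i - p i) (Nat.zero_le d) hdD.le
    simp only [← Icc_add_one_left_eq_Ioc, zero_add] at hsplit
    have hlow : ∑ i ∈ Icc 1 d, (ptilde i - p i) = ∑ i ∈ Icc 1 d, ζ i :=
      sum_congr rfl fun i hi => by rw [hptA i hi, add_sub_cancel_left]
    have hhigh : ∑ i ∈ Icc (d + 1) D, (ptilde i - p i) = -∑ j ∈ Icc (d + 1) D, ζ j := by
      rw [← sum_neg_distrib]
      exact sum_congr rfl fun i hi => by rw [hptB i hi, sub_sub_cancel_left]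
    rw [← hsplit, hlow, hhigh, hsum, add_neg_cancel]

/-- Main redistribution theorem: shifting acceptance-probability mass from later
positions to earlier positions (keeping the total fixed) cannot decrease the
expected accepted length `E[L] = ∑_{k=1}^D ∏_{i=1}^k p i`. -/
theorem stmt1 (D d : ℕ) (hd : 1 < d) (hdD : d < D) (p ζ ptilde : ℕ → ℝ)
    (hp1 : p 1 ≤ 1) (hpD : 0 ≤ p D)
    (hmono : ∀ i, 1 ≤ i → i < D → p (i + 1) ≤ p i)
    (hζ0 : ∀ i ∈ Finset.Icc 1 D, 0 ≤ ζ i)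
    (hζ1 : ∀ i ∈ Finset.Icc 1 D, ζ i ≤ 1)
    (hζp : ∀ i ∈ Finset.Icc 1 D, ζ i < p i)
    (hsum : ∑ i ∈ Finset.Icc 1 d, ζ i = ∑ j ∈ Finset.Icc (d + 1) D, ζ j)
    (hptA : ∀ i ∈ Finset.Icc 1 d, ptilde i = p i + ζ i)
    (hptB : ∀ i ∈ Finset.Icc (d + 1) D, ptilde i = p i - ζ i)
    (hpt0 : ∀ i ∈ Finset.Icc 1 D, 0 ≤ ptilde i)
    (hpt1 : ∀ i ∈ Finset.Icc 1 D, ptilde i ≤ 1) :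
    ∑ k ∈ Finset.Icc 1 D, ∏ i ∈ Finset.Icc 1 k, p i
      ≤ ∑ k ∈ Finset.Icc 1 D, ∏ i ∈ Finset.Icc 1 k, ptilde i :=
  stmt1_general D d hd hdD p ζ ptilde hpD hmono hζ0 hsum hptA hptB hpt0 hpt1
end

section
/- Let 1 ≥ p_{d+1} ≥ p_{d+2} ≥ ... ≥ p_D ≥ 0, let ζ_{d+1}, ..., ζ_D ≥ 0 with ζ_i ≤ p_i, and set ζ = Σ_{i=d+1}^D ζ_i; assume ζ ≤ p_{d+1}. Then Σ_{k=d+1}^D Π_{i=d+1}^k (p_i − ζ_i) ≥ Σ_{k=d+1}^D (p_{d+1} − ζ)·Π_{i=d+2}^k p_i. -/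
/-!
Write `E f a` for `∑_{k=a}^D ∏_{i=a}^k f i`, so that `E f a = f a * (1 + E f (a+1))`, and argue by
downward induction on `a`. Peeling off position `a` and using the induction hypothesis at `a + 1`,
the claim reduces to `s * (1 + p_{a+1} t - (p_a - ζ_a) t) ≥ 0`, where `s = ∑_{i>a} ζ_i` and
`t = 1 + E p (a+2)`. This holds because `p_a - ζ_a ≤ 1` and, `p` being antitone, shifting the
start of the process one step later can only shorten it: `E p (a+2) ≤ E p (a+1) = p_{a+1} t`.
-/

open Finset

/-- `f i` is the probability of accepting position `i` once all earlier positions are accepted,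
so the `k`-th summand is the probability that positions `a, …, k` are all accepted. -/
def expectedAcceptLength (f : ℕ → ℝ) (a D : ℕ) : ℝ :=
  ∑ k ∈ Icc a D, ∏ i ∈ Icc a k, f i

section expectedAcceptLength

variable {f : ℕ → ℝ} {a D : ℕ}

lemma expectedAcceptLength_of_lt (h : D < a) : expectedAcceptLength f a D = 0 := by
  simp [expectedAcceptLength, Icc_eq_empty_of_lt h]

lemma sum_prod_Icc_add_one_eq_one_add_expectedAcceptLength (f : ℕ → ℝ) (h : a ≤ D) :
    ∑ k ∈ Icc a D, ∏ i ∈ Icc (a + 1) k, f i = 1 + expectedAcceptLength f (a + 1) D := by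
  rw [← add_sum_Ioc_eq_sum_Icc h, ← Icc_add_one_left_eq_Ioc, expectedAcceptLength,
    Icc_eq_empty_of_lt a.lt_succ_self, prod_empty]

lemma expectedAcceptLength_of_le (h : a ≤ D) :
    expectedAcceptLength f a D = f a * (1 + expectedAcceptLength f (a + 1) D) := by
  rw [← sum_prod_Icc_add_one_eq_one_add_expectedAcceptLength f h, mul_sum, expectedAcceptLength]
  refine sum_congr rfl fun k hk => ?_
  rw [← mul_prod_Ioc_eq_prod_Icc (mem_Icc.1 hk).1, Icc_add_one_left_eq_Ioc]

lemma expectedAcceptLength_nonneg (hf : ∀ i ∈ Icc a D, 0 ≤ f i) :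
    0 ≤ expectedAcceptLength f a D :=
  sum_nonneg fun _ hk => prod_nonneg fun i hi =>
    hf i (mem_Icc.2 ⟨(mem_Icc.1 hi).1, (mem_Icc.1 hi).2.trans (mem_Icc.1 hk).2⟩)

lemma expectedAcceptLength_succ_le (hf0 : ∀ i ∈ Icc a D, 0 ≤ f i)
    (hf : AntitoneOn f (Icc a D : Set ℕ)) :
    expectedAcceptLength f (a + 1) D ≤ expectedAcceptLength f a D := by
  rcases lt_or_ge D a with hDa | haD
  · rw [expectedAcceptLength_of_lt hDa, expectedAcceptLength_of_lt (hDa.trans a.lt_succ_self)]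
  induction haD using Nat.decreasingInduction with
  | self =>
    rw [expectedAcceptLength_of_lt D.lt_succ_self]
    exact expectedAcceptLength_nonneg hf0
  | of_succ a haD ih =>
    have hsub : Icc (a + 1) D ⊆ Icc a D := Icc_subset_Icc_left a.le_succ
    have ha : a ∈ Icc a D := left_mem_Icc.2 haD.le
    have ha1 : a + 1 ∈ Icc a D := mem_Icc.2 ⟨a.le_succ, haD⟩
    rw [expectedAcceptLength_of_le haD, expectedAcceptLength_of_le haD.le]
    exact mul_le_mul (hf ha ha1 a.le_succ)
      (add_le_add le_rfl (ih (fun i hi => hf0 i (hsub hi)) (hf.mono hsub)))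
      (add_nonneg zero_le_one (expectedAcceptLength_nonneg fun i hi =>
        hf0 i (Icc_subset_Icc_left (by omega) hi)))
      (hf0 a ha)

end expectedAcceptLength

lemma concentrated_le_distributed {p ζ : ℕ → ℝ} {a D : ℕ} (haD : a ≤ D) (hp1 : p a ≤ 1)
    (hp : AntitoneOn p (Icc a D : Set ℕ)) (hζ0 : ∀ i ∈ Icc a D, 0 ≤ ζ i)
    (hζp : ∀ i ∈ Icc a D, ζ i ≤ p i) :
    (p a - ∑ i ∈ Icc a D, ζ i) * (1 + expectedAcceptLength p (a + 1) D)
      ≤ expectedAcceptLength (p - ζ) a D := by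
  induction haD using Nat.decreasingInduction with
  | self => simp [expectedAcceptLength_of_le le_rfl, expectedAcceptLength_of_lt D.lt_succ_self]
  | of_succ a haD ih =>
    have hsub : Icc (a + 1) D ⊆ Icc a D := Icc_subset_Icc_left a.le_succ
    have ha : a ∈ Icc a D := left_mem_Icc.2 haD.le
    have ha1 : a + 1 ∈ Icc a D := mem_Icc.2 ⟨a.le_succ, haD⟩
    have ih := ih ((hp ha ha1 a.le_succ).trans hp1) (hp.mono hsub)
      (fun i hi => hζ0 i (hsub hi)) (fun i hi => hζp i (hsub hi))
    have hp0 : ∀ i ∈ Icc a D, 0 ≤ p i := fun i hi => (hζ0 i hi).trans (hζp i hi)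
    have hs : 0 ≤ ∑ i ∈ Icc (a + 1) D, ζ i := sum_nonneg fun i hi => hζ0 i (hsub hi)
    set t := 1 + expectedAcceptLength p (a + 1 + 1) D
    have ht : 0 ≤ t := add_nonneg zero_le_one (expectedAcceptLength_nonneg fun i hi =>
      hp0 i (Icc_subset_Icc_left (by omega) hi))
    have htail : t ≤ 1 + p (a + 1) * t := by
      rw [← expectedAcceptLength_of_le haD]
      exact add_le_add le_rfl
        (expectedAcceptLength_succ_le (fun i hi => hp0 i (hsub hi)) (hp.mono hsub))
    have hAt : (p a - ζ a) * t ≤ 1 + p (a + 1) * t :=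
      (mul_le_of_le_one_left ht ((sub_le_self _ (hζ0 a ha)).trans hp1)).trans htail
    have hA : 0 ≤ p a - ζ a := sub_nonneg.2 (hζp a ha)
    rw [expectedAcceptLength_of_le haD, expectedAcceptLength_of_le haD.le,
      ← add_sum_Ioc_eq_sum_Icc haD.le, ← Icc_add_one_left_eq_Ioc, Pi.sub_apply]
    calc (p a - (ζ a + ∑ i ∈ Icc (a + 1) D, ζ i)) * (1 + p (a + 1) * t)
        = (p a - ζ a) * (1 + (p (a + 1) - ∑ i ∈ Icc (a + 1) D, ζ i) * t)
          - (∑ i ∈ Icc (a + 1) D, ζ i) * (1 + p (a + 1) * t - (p a - ζ a) * t) := by ring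
      _ ≤ (p a - ζ a) * (1 + (p (a + 1) - ∑ i ∈ Icc (a + 1) D, ζ i) * t) :=
        sub_le_self _ (mul_nonneg hs (sub_nonneg.2 hAt))
      _ ≤ (p a - ζ a) * (1 + expectedAcceptLength (p - ζ) (a + 1) D) := by gcongr

theorem stmt8_general (D d : ℕ) (hdD : d < D) (p ζ : ℕ → ℝ)
    (hp1 : p (d + 1) ≤ 1)
    (hmono : ∀ i, d + 1 ≤ i → i < D → p (i + 1) ≤ p i)
    (hζ0 : ∀ i ∈ Finset.Icc (d + 1) D, 0 ≤ ζ i)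
    (hζp : ∀ i ∈ Finset.Icc (d + 1) D, ζ i ≤ p i) :
    ∑ k ∈ Finset.Icc (d + 1) D,
        (p (d + 1) - ∑ i ∈ Finset.Icc (d + 1) D, ζ i) * ∏ i ∈ Finset.Icc (d + 2) k, p i
      ≤ ∑ k ∈ Finset.Icc (d + 1) D, ∏ i ∈ Finset.Icc (d + 1) k, (p i - ζ i) := by
  have hp : AntitoneOn p (Icc (d + 1) D : Set ℕ) := by
    rw [coe_Icc]
    exact antitoneOn_of_succ_le Set.ordConnected_Icc fun i _ hi hi1 =>
      hmono i hi.1 (Nat.succ_le_iff.1 hi1.2)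
  rw [← mul_sum, sum_prod_Icc_add_one_eq_one_add_expectedAcceptLength p hdD]
  exact concentrated_le_distributed hdD hp1 hp hζ0 hζp

/-- Distributing a fixed total decrease `ζ` over positions `d+1..D` yields an expected
accepted suffix length at least as large as concentrating the entire decrease at `d+1`:
`∑_{k=d+1}^D ∏_{i=d+1}^k (p_i − ζ_i) ≥ ∑_{k=d+1}^D (p_{d+1} − ζ)·∏_{i=d+2}^k p_i`. -/
theorem stmt8 (D d : ℕ) (hdD : d < D) (p ζ : ℕ → ℝ)
    (hp1 : p (d + 1) ≤ 1) (hpD : 0 ≤ p D)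
    (hmono : ∀ i, d + 1 ≤ i → i < D → p (i + 1) ≤ p i)
    (hζ0 : ∀ i ∈ Finset.Icc (d + 1) D, 0 ≤ ζ i)
    (hζp : ∀ i ∈ Finset.Icc (d + 1) D, ζ i ≤ p i)
    (hζsum : (∑ i ∈ Finset.Icc (d + 1) D, ζ i) ≤ p (d + 1)) :
    ∑ k ∈ Finset.Icc (d + 1) D,
        (p (d + 1) - ∑ i ∈ Finset.Icc (d + 1) D, ζ i) * ∏ i ∈ Finset.Icc (d + 2) k, p i
      ≤ ∑ k ∈ Finset.Icc (d + 1) D, ∏ i ∈ Finset.Icc (d + 1) k, (p i - ζ i) :=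
  stmt8_general D d hdD p ζ hp1 hmono hζ0 hζp
end

section
/- Let p_1, ..., p_D ∈ [0,1] be nonincreasing with p_{d+1} < 1, and let ζ ≥ 0 with p_d − p_{d+1} + ζ appearing as a deficit term. If p_d + ζ_d ≤ p_1 fails (i.e., p_d + ζ_d − p_1 ≥ 0), then the difference ΔE_4^1 = ζ_1 + Π_{i=2}^{d−1}(p_i + ζ_i)·ζ_1·(p_d + ζ_d − p_1)·[1 + Σ_{k=d+1}^D Π_{i=d+1}^k (p_i − ζ_i)] is nonnegative; and if p_d + ζ_d − p_1 < 0, then ΔE_4^1 ≥ ζ_1·[(1 − p_1) + (p_d + ζ_d − p_{d+1})]/(1 − p_{d+1}) ≥ 0. -/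
open Finset

/-!
Write `x = p_d + ζ_d − p_1`, `P = ∏_{i=2}^{d−1} (p_i + ζ_i) ∈ [0, 1]` and
`S = ∑_{k=d+1}^D ∏_{i=d+1}^k (p_i − ζ_i)`. Every factor `p_i − ζ_i` with `i > d` lies in
`[0, p_{d+1}]`, so `S` is dominated by the geometric series `q + q² + ⋯ = q / (1 − q)` with
`q = p_{d+1}`, i.e. `P (1 + S) ≤ 1 / (1 − q)`. When `x ≥ 0` every term of `ΔE_4^1` is nonnegative;
when `x < 0` the bound on `P (1 + S)` gives `ΔE_4^1 ≥ ζ_1 (1 + x / (1 − q))`, which is the claimed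
lower bound since `(1 − p_1) + (p_d + ζ_d − p_{d+1}) = (1 − q) + x`.
-/

theorem antitoneOn_Icc_of_succ_le {α : Type*} [Preorder α] {f : ℕ → α} {a b : ℕ}
    (hf : ∀ i, a ≤ i → i < b → f (i + 1) ≤ f i) : AntitoneOn f (Set.Icc a b) := by
  intro i hi j hj hij
  induction j, hij using Nat.le_induction with
  | base => exact le_rfl
  | succ n hin ih =>
    exact (hf n (hi.1.trans hin) hj.2).trans (ih ⟨hi.1.trans hin, (Nat.le_succ n).trans hj.2⟩)

theorem prod_Icc_le_pow_sub {R : Type*} [CommMonoidWithZero R] [PartialOrder R]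
    [ZeroLEOneClass R] [PosMulMono R] {a : ℕ → R} {q : R} {m k : ℕ}
    (ha0 : ∀ i ∈ Icc (m + 1) k, 0 ≤ a i) (haq : ∀ i ∈ Icc (m + 1) k, a i ≤ q) :
    ∏ i ∈ Icc (m + 1) k, a i ≤ q ^ (k - m) := by
  calc ∏ i ∈ Icc (m + 1) k, a i ≤ ∏ _i ∈ Icc (m + 1) k, q := prod_le_prod ha0 haq
    _ = q ^ (k - m) := by rw [prod_const, Nat.card_Icc, Nat.add_sub_add_right]

theorem sum_prod_Icc_le_div_one_sub {a : ℕ → ℝ} {q : ℝ} {m n : ℕ} (hq0 : 0 ≤ q) (hq1 : q < 1)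
    (ha0 : ∀ i ∈ Icc (m + 1) n, 0 ≤ a i) (haq : ∀ i ∈ Icc (m + 1) n, a i ≤ q) :
    ∑ k ∈ Icc (m + 1) n, ∏ i ∈ Icc (m + 1) k, a i ≤ q / (1 - q) := by
  have hsub : ∀ k ∈ Icc (m + 1) n, Icc (m + 1) k ⊆ Icc (m + 1) n := fun k hk =>
    Icc_subset_Icc le_rfl (mem_Icc.1 hk).2
  calc ∑ k ∈ Icc (m + 1) n, ∏ i ∈ Icc (m + 1) k, a i
      ≤ ∑ k ∈ Icc (m + 1) n, q ^ (k - m) := sum_le_sum fun k hk =>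
        prod_Icc_le_pow_sub (fun i hi => ha0 i (hsub k hk hi)) (fun i hi => haq i (hsub k hk hi))
    _ = ∑ j ∈ Ico 1 (n - m + 1), q ^ j := by
        refine sum_nbij' (· - m) (· + m) ?_ ?_ ?_ ?_ ?_ <;> intro k hk <;>
          simp only [mem_Icc, mem_Ico] at hk ⊢ <;> omega
    _ ≤ q ^ 1 / (1 - q) := geom_sum_Ico_le_of_lt_one hq0 hq1
    _ = q / (1 - q) := by rw [pow_one]

theorem mul_div_one_sub_le_of_nonpos {z x P S q : ℝ} (hq : q < 1) (hz : 0 ≤ z) (hx : x ≤ 0)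
    (hP : P ≤ 1) (hS0 : 0 ≤ S) (hS : S ≤ q / (1 - q)) :
    z * ((1 - q + x) / (1 - q)) ≤ z + P * z * x * (1 + S) := by
  have hq' : 0 < 1 - q := sub_pos.2 hq
  have hPS : P * (1 + S) ≤ 1 / (1 - q) := calc
    P * (1 + S) ≤ 1 + S := mul_le_of_le_one_left (by linarith) hP
    _ ≤ 1 + q / (1 - q) := by linarith
    _ = 1 / (1 - q) := by field_simp; ring
  calc z * ((1 - q + x) / (1 - q)) = z * (1 + x * (1 / (1 - q))) := by field_simp
    _ ≤ z * (1 + x * (P * (1 + S))) := by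
        have := mul_le_mul_of_nonpos_left hPS hx
        gcongr
    _ = z + P * z * x * (1 + S) := by ring

theorem stmt15_general (D d : ℕ) (hdD : d < D) (p ζ : ℕ → ℝ)
    (hp1 : p 1 ≤ 1)
    (hmono : ∀ i, 1 ≤ i → i < D → p (i + 1) ≤ p i)
    (hpd1 : p (d + 1) < 1)
    (hζ0 : ∀ i ∈ Finset.Icc 1 D, 0 ≤ ζ i)
    (hup : ∀ i ∈ Finset.Icc 1 d, p i + ζ i ≤ 1)
    (hge : p (d + 1) ≤ p d + ζ d)
    (hdown0 : ∀ i ∈ Finset.Icc (d + 1) D, 0 ≤ p i - ζ i) :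
    (0 ≤ p d + ζ d - p 1 →
      0 ≤ ζ 1 + (∏ i ∈ Finset.Icc 2 (d - 1), (p i + ζ i)) * ζ 1 * (p d + ζ d - p 1) *
            (1 + ∑ k ∈ Finset.Icc (d + 1) D, ∏ i ∈ Finset.Icc (d + 1) k, (p i - ζ i)))
    ∧ (p d + ζ d - p 1 < 0 →
        (ζ 1 * (((1 - p 1) + (p d + ζ d - p (d + 1))) / (1 - p (d + 1)))
            ≤ ζ 1 + (∏ i ∈ Finset.Icc 2 (d - 1), (p i + ζ i)) * ζ 1 * (p d + ζ d - p 1) *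
                (1 + ∑ k ∈ Finset.Icc (d + 1) D, ∏ i ∈ Finset.Icc (d + 1) k, (p i - ζ i)))
          ∧ 0 ≤ ζ 1 * (((1 - p 1) + (p d + ζ d - p (d + 1))) / (1 - p (d + 1)))) := by
  have hanti : AntitoneOn p (Set.Icc 1 D) := antitoneOn_Icc_of_succ_le hmono
  have hζ : ∀ i, 1 ≤ i → i ≤ D → 0 ≤ ζ i := fun i h1 h2 => hζ0 i (mem_Icc.2 ⟨h1, h2⟩)
  have hζ1 : 0 ≤ ζ 1 := hζ 1 le_rfl (by omega)
  have hq0 : 0 ≤ p (d + 1) := by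
    linarith [hdown0 (d + 1) (mem_Icc.2 ⟨le_rfl, hdD⟩), hζ (d + 1) (by omega) hdD]
  have hmid : ∀ i ∈ Icc 2 (d - 1), 0 ≤ p i + ζ i ∧ p i + ζ i ≤ 1 := fun i hi => by
    obtain ⟨h2, hid⟩ := mem_Icc.1 hi
    have : p (d + 1) ≤ p i := hanti ⟨by omega, by omega⟩ ⟨by omega, hdD⟩ (by omega)
    exact ⟨by linarith [hζ i (by omega) (by omega)], hup i (mem_Icc.2 ⟨by omega, by omega⟩)⟩
  have hP0 : 0 ≤ ∏ i ∈ Icc 2 (d - 1), (p i + ζ i) := prod_nonneg fun i hi => (hmid i hi).1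
  have hP1 : ∏ i ∈ Icc 2 (d - 1), (p i + ζ i) ≤ 1 :=
    prod_le_one (fun i hi => (hmid i hi).1) fun i hi => (hmid i hi).2
  have hS := sum_prod_Icc_le_div_one_sub (m := d) (n := D) (a := fun i => p i - ζ i) hq0 hpd1
    hdown0 fun i hi => by
      obtain ⟨h1, h2⟩ := mem_Icc.1 hi
      linarith [hanti ⟨by omega, hdD⟩ ⟨by omega, h2⟩ h1, hζ i (by omega) h2]
  have hS0 : 0 ≤ ∑ k ∈ Icc (d + 1) D, ∏ i ∈ Icc (d + 1) k, (p i - ζ i) :=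
    sum_nonneg fun k hk => prod_nonneg fun i hi =>
      hdown0 i (Icc_subset_Icc le_rfl (mem_Icc.1 hk).2 hi)
  have hnum : (1 - p 1) + (p d + ζ d - p (d + 1)) = 1 - p (d + 1) + (p d + ζ d - p 1) := by ring
  refine ⟨fun hx => ?_, fun hx => ⟨?_, ?_⟩⟩
  · have := mul_nonneg (mul_nonneg (mul_nonneg hP0 hζ1) hx) (add_nonneg zero_le_one hS0)
    linarith
  · rw [hnum]
    exact mul_div_one_sub_le_of_nonpos hpd1 hζ1 hx.le hP1 hS0 hS
  · exact mul_nonneg hζ1 (div_nonneg (by linarith) (by linarith))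

/-- Case analysis for `ΔE_4^1`: with `ΔE41 = ζ_1 + ∏_{i=2}^{d−1}(p_i + ζ_i)·ζ_1·
(p_d + ζ_d − p_1)·[1 + ∑_{k=d+1}^D ∏_{i=d+1}^k (p_i − ζ_i)]`, if
`p_d + ζ_d − p_1 ≥ 0` then `ΔE41 ≥ 0`; and if `p_d + ζ_d − p_1 < 0` then
`ΔE41 ≥ ζ_1·[(1 − p_1) + (p_d + ζ_d − p_{d+1})]/(1 − p_{d+1}) ≥ 0`. -/
theorem stmt15 (D d : ℕ) (hd : 1 < d) (hdD : d < D) (p ζ : ℕ → ℝ)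
    (hp1 : p 1 ≤ 1) (hpD : 0 ≤ p D)
    (hmono : ∀ i, 1 ≤ i → i < D → p (i + 1) ≤ p i)
    (hpd1 : p (d + 1) < 1)
    (hζ0 : ∀ i ∈ Finset.Icc 1 D, 0 ≤ ζ i)
    (hup : ∀ i ∈ Finset.Icc 1 d, p i + ζ i ≤ 1)
    (hdsum : p d + ζ d + ζ 1 ≤ 1)
    (hge : p (d + 1) ≤ p d + ζ d)
    (hdown0 : ∀ i ∈ Finset.Icc (d + 1) D, 0 ≤ p i - ζ i)
    (hdown1 : ∀ i ∈ Finset.Icc (d + 1) D, p i - ζ i ≤ 1) :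
    (0 ≤ p d + ζ d - p 1 →
      0 ≤ ζ 1 + (∏ i ∈ Finset.Icc 2 (d - 1), (p i + ζ i)) * ζ 1 * (p d + ζ d - p 1) *
            (1 + ∑ k ∈ Finset.Icc (d + 1) D, ∏ i ∈ Finset.Icc (d + 1) k, (p i - ζ i)))
    ∧ (p d + ζ d - p 1 < 0 →
        (ζ 1 * (((1 - p 1) + (p d + ζ d - p (d + 1))) / (1 - p (d + 1)))
            ≤ ζ 1 + (∏ i ∈ Finset.Icc 2 (d - 1), (p i + ζ i)) * ζ 1 * (p d + ζ d - p 1) *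
                (1 + ∑ k ∈ Finset.Icc (d + 1) D, ∏ i ∈ Finset.Icc (d + 1) k, (p i - ζ i)))
          ∧ 0 ≤ ζ 1 * (((1 - p 1) + (p d + ζ d - p (d + 1))) / (1 - p (d + 1)))) :=
  stmt15_general D d hdD p ζ hp1 hmono hpd1 hζ0 hup hge hdown0
end
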